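/- arXiv:math/0611685 — 6 statements merged into one kernel-verified Lean document; each statement's English description precedes it below -/
import Mathlib

section
/- For b > 0, α ≥ 0 and n ∈ ℕ, the posterior expectation of p = bⁿ/(b+θ)ⁿ given X = n, under prior density e^{-αθ} on θ ∈ [0,∞) with likelihood f_{b+θ}(n), equals f_{(1+α)b}(n)/F_{(1+α)b}(n). That is, [∫₀^∞ (bⁿ/(b+θ)ⁿ) f_{b+θ}(n) e^{-αθ} dθ] / [∫₀^∞ f_{b+θ}(n) e^{-αθ} dθ] = f_{(1+α)b}(n)/F_{(1+α)b}(n). -/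
open MeasureTheory Real

noncomputable def pois (m : ℝ) (n : ℕ) : ℝ := m ^ n * Real.exp (-m) / n.factorial

noncomputable def poisCDF (m : ℝ) (n : ℕ) : ℝ := ∑ k ∈ Finset.range (n + 1), pois m k

open Filter

private lemma sum_deriv_eq (b c : ℝ) (hc : c ≠ 0) (n : ℕ) (θ : ℝ) :
    c * ∑ k ∈ Finset.range (n+1), (n.factorial : ℝ)/(k.factorial) * (b+θ)^k / c^(n+1-k)
      - ∑ k ∈ Finset.range (n+1), (n.factorial : ℝ)/(k.factorial) * (k * (b+θ)^(k-1)) / c^(n+1-k)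
      = (b+θ)^n := by
  rw [Finset.sum_range_succ' (fun k => (n.factorial : ℝ)/(k.factorial) * (k * (b+θ)^(k-1)) / c^(n+1-k)) n]
  rw [Finset.sum_range_succ (fun k => (n.factorial : ℝ)/(k.factorial) * (b+θ)^k / c^(n+1-k)) n]
  simp only [Nat.cast_zero, zero_mul, mul_zero, zero_div, add_zero]
  rw [mul_add, Finset.mul_sum]
  have h1 : ∀ i ∈ Finset.range n,
      c * ((n.factorial : ℝ)/(i.factorial) * (b+θ)^i / c^(n+1-i))
        = (n.factorial : ℝ)/((i+1).factorial) * ((i+1 : ℕ) * (b+θ)^((i+1)-1)) / c^(n+1-(i+1)) := by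
    intro i hi
    rw [Finset.mem_range] at hi
    have h2 : n + 1 - i = (n - i) + 1 := by omega
    have h3 : n + 1 - (i+1) = n - i := by omega
    rw [h2, h3, Nat.factorial_succ, Nat.add_sub_cancel, pow_succ]
    push_cast
    have : (i.factorial : ℝ) ≠ 0 := Nat.cast_ne_zero.2 i.factorial_ne_zero
    field_simp
  rw [Finset.sum_congr rfl h1]
  have : c * ((n.factorial : ℝ)/(n.factorial) * (b+θ)^n / c^(n+1-n)) = (b+θ)^n := by
    have h4 : n + 1 - n = 1 := by omega
    rw [h4, pow_one, div_self (Nat.cast_ne_zero.2 n.factorial_ne_zero)]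
    field_simp
  rw [this]; ring

private lemma hasDerivAt_G (b c : ℝ) (hc : c ≠ 0) (n : ℕ) (θ : ℝ) :
    HasDerivAt (fun θ : ℝ => -(Real.exp (-(c*(b+θ))) *
        ∑ k ∈ Finset.range (n+1), (n.factorial : ℝ)/(k.factorial) * (b+θ)^k / c^(n+1-k)))
      ((b+θ)^n * Real.exp (-(c*(b+θ)))) θ := by
  have hexp : HasDerivAt (fun θ : ℝ => Real.exp (-(c*(b+θ)))) (-c * Real.exp (-(c*(b+θ)))) θ := by
    have h1 : HasDerivAt (fun θ : ℝ => -(c*(b+θ))) (-c) θ := by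
      have := ((hasDerivAt_id θ).const_add b).const_mul c
      simpa [Pi.neg_def] using this.neg
    simpa [mul_comm] using h1.exp
  have hsum : HasDerivAt (fun θ : ℝ =>
      ∑ k ∈ Finset.range (n+1), (n.factorial : ℝ)/(k.factorial) * (b+θ)^k / c^(n+1-k))
      (∑ k ∈ Finset.range (n+1), (n.factorial : ℝ)/(k.factorial) * (k * (b+θ)^(k-1)) / c^(n+1-k)) θ := by
    apply HasDerivAt.fun_sum
    intro k hk
    have hpow : HasDerivAt (fun θ : ℝ => (b+θ)^k) (k * (b+θ)^(k-1)) θ := by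
      have := ((hasDerivAt_id θ).const_add b).pow k
      simpa [Pi.pow_def] using this
    simpa [mul_div_assoc] using (hpow.const_mul ((n.factorial : ℝ)/(k.factorial))).div_const (c^(n+1-k))
  have := (hexp.fun_mul hsum).fun_neg
  refine this.congr_deriv ?_
  have := sum_deriv_eq b c hc n θ
  rw [← this]; ring

lemma key_integral (b c : ℝ) (hb : 0 < b) (hc : 0 < c) (n : ℕ) :
    ∫ θ in Set.Ioi (0:ℝ), (b+θ)^n * Real.exp (-(c*(b+θ)))
      = Real.exp (-(c*b)) * ∑ k ∈ Finset.range (n+1), (n.factorial : ℝ)/(k.factorial) * b^k / c^(n+1-k) := by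
  have htend : Tendsto (fun θ : ℝ => -(Real.exp (-(c*(b+θ))) *
      ∑ k ∈ Finset.range (n+1), (n.factorial : ℝ)/(k.factorial) * (b+θ)^k / c^(n+1-k)))
      atTop (nhds 0) := by
    have : Tendsto (fun θ : ℝ => Real.exp (-(c*(b+θ))) *
        ∑ k ∈ Finset.range (n+1), (n.factorial : ℝ)/(k.factorial) * (b+θ)^k / c^(n+1-k))
        atTop (nhds 0) := by
      have heq : ∀ θ : ℝ, Real.exp (-(c*(b+θ))) *
          ∑ k ∈ Finset.range (n+1), (n.factorial : ℝ)/(k.factorial) * (b+θ)^k / c^(n+1-k)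
          = ∑ k ∈ Finset.range (n+1),
            ((n.factorial : ℝ)/(k.factorial) / c^(n+1-k) / c^k) * ((c*(b+θ))^k * Real.exp (-(c*(b+θ)))) := by
        intro θ
        rw [Finset.mul_sum]
        refine Finset.sum_congr rfl fun k hk => ?_
        rw [mul_pow]
        field_simp
      simp only [heq]
      have : Tendsto (fun θ : ℝ => ∑ k ∈ Finset.range (n+1),
          ((n.factorial : ℝ)/(k.factorial) / c^(n+1-k) / c^k) * ((c*(b+θ))^k * Real.exp (-(c*(b+θ)))))
          atTop (nhds (∑ k ∈ Finset.range (n+1), ((n.factorial : ℝ)/(k.factorial) / c^(n+1-k) / c^k) * 0)) := by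
        apply tendsto_finset_sum
        intro k hk
        apply Tendsto.const_mul
        have hcomp : Tendsto (fun θ : ℝ => c*(b+θ)) atTop atTop := by
          apply Tendsto.const_mul_atTop hc
          exact tendsto_atTop_add_const_left _ b tendsto_id
        exact (Real.tendsto_pow_mul_exp_neg_atTop_nhds_zero k).comp hcomp
      simpa using this
    simpa using this.neg
  have := integral_Ioi_of_hasDerivAt_of_nonneg' (a := (0:ℝ))
    (g := fun θ : ℝ => -(Real.exp (-(c*(b+θ))) *
      ∑ k ∈ Finset.range (n+1), (n.factorial : ℝ)/(k.factorial) * (b+θ)^k / c^(n+1-k)))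
    (g' := fun θ : ℝ => (b+θ)^n * Real.exp (-(c*(b+θ))))
    (fun x _ => hasDerivAt_G b c hc.ne' n x)
    (fun x hx => mul_nonneg (pow_nonneg (by linarith [hx.out] : (0:ℝ) ≤ b+x) n) (Real.exp_pos _).le)
    htend
  rw [this]
  simp only [add_zero, zero_sub, neg_neg]


theorem stmt_3 (b α : ℝ) (hb : 0 < b) (hα : 0 ≤ α) (n : ℕ) :
    (∫ θ in Set.Ioi (0 : ℝ), b ^ n / (b + θ) ^ n * pois (b + θ) n * Real.exp (-α * θ))
      / (∫ θ in Set.Ioi (0 : ℝ), pois (b + θ) n * Real.exp (-α * θ))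
      = pois ((1 + α) * b) n / poisCDF ((1 + α) * b) n := by
  set c : ℝ := 1 + α with hcdef
  have hc : 0 < c := by positivity
  have hfac : (0:ℝ) < n.factorial := by exact_mod_cast n.factorial_pos
  -- numerator
  have hN : (∫ θ in Set.Ioi (0 : ℝ), b ^ n / (b + θ) ^ n * pois (b + θ) n * Real.exp (-α * θ))
      = b ^ n * Real.exp (-b) / (n.factorial * c) := by
    have heq : Set.EqOn (fun θ : ℝ => b ^ n / (b + θ) ^ n * pois (b + θ) n * Real.exp (-α * θ))
        (fun θ : ℝ => (b ^ n / n.factorial * Real.exp (α * b)) * ((b+θ)^0 * Real.exp (-(c*(b+θ)))))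
        (Set.Ioi 0) := by
      intro θ hθ
      have hθ0 : 0 < θ := hθ
      have hbθ : (0:ℝ) < b + θ := by linarith
      have e1 : Real.exp (-(b+θ)) * Real.exp (-α*θ) = Real.exp (α*b) * Real.exp (-(c*(b+θ))) := by
        rw [← Real.exp_add, ← Real.exp_add]; congr 1; rw [hcdef]; ring
      simp only [pois, pow_zero, one_mul]
      calc b ^ n / (b + θ) ^ n * ((b + θ) ^ n * Real.exp (-(b + θ)) / n.factorial) * Real.exp (-α * θ)
          = b ^ n / n.factorial * (Real.exp (-(b+θ)) * Real.exp (-α*θ)) := by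
            field_simp
        _ = b ^ n / n.factorial * Real.exp (α * b) * Real.exp (-(c * (b + θ))) := by
            rw [e1]; ring
    rw [setIntegral_congr_fun measurableSet_Ioi heq, integral_const_mul,
      key_integral b c hb hc 0]
    have e2 : Real.exp (α*b) * Real.exp (-(c*b)) = Real.exp (-b) := by
      rw [← Real.exp_add]; congr 1; rw [hcdef]; ring
    rw [Finset.sum_range_one]
    simp only [Nat.factorial_zero, Nat.cast_one, pow_zero, pow_one]
    rw [← e2]
    field_simp
    ring

  -- denominator
  have hD : (∫ θ in Set.Ioi (0 : ℝ), pois (b + θ) n * Real.exp (-α * θ))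
      = Real.exp (-b) / c^(n+1) * ∑ k ∈ Finset.range (n+1), (c*b)^k / k.factorial := by
    have heq : Set.EqOn (fun θ : ℝ => pois (b + θ) n * Real.exp (-α * θ))
        (fun θ : ℝ => (Real.exp (α * b) / n.factorial) * ((b+θ)^n * Real.exp (-(c*(b+θ)))))
        (Set.Ioi 0) := by
      intro θ hθ
      have e1 : Real.exp (-(b+θ)) * Real.exp (-α*θ) = Real.exp (α*b) * Real.exp (-(c*(b+θ))) := by
        rw [← Real.exp_add, ← Real.exp_add]; congr 1; rw [hcdef]; ring
      simp only [pois]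
      calc (b + θ) ^ n * Real.exp (-(b + θ)) / n.factorial * Real.exp (-α * θ)
          = (b + θ) ^ n / n.factorial * (Real.exp (-(b+θ)) * Real.exp (-α*θ)) := by ring
        _ = Real.exp (α * b) / n.factorial * ((b + θ) ^ n * Real.exp (-(c * (b + θ)))) := by
            rw [e1]; ring
    rw [setIntegral_congr_fun measurableSet_Ioi heq, integral_const_mul,
      key_integral b c hb hc n]
    have hsum : ∑ k ∈ Finset.range (n+1), (n.factorial : ℝ)/(k.factorial) * b^k / c^(n+1-k)
        = (n.factorial : ℝ) / c^(n+1) * ∑ k ∈ Finset.range (n+1), (c*b)^k / k.factorial := by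
      rw [Finset.mul_sum]
      refine Finset.sum_congr rfl fun k hk => ?_
      rw [Finset.mem_range] at hk
      have h1 : c^(n+1-k) * c^k = c^(n+1) := by
        rw [← pow_add]; congr 1; omega
      have hk0 : (k.factorial : ℝ) ≠ 0 := Nat.cast_ne_zero.2 k.factorial_ne_zero
      rw [mul_pow]
      field_simp
      rw [← h1]
    have e2 : Real.exp (α*b) * Real.exp (-(c*b)) = Real.exp (-b) := by
      rw [← Real.exp_add]; congr 1; rw [hcdef]; ring
    rw [hsum]
    calc Real.exp (α * b) / n.factorial * (Real.exp (-(c*b)) * ((n.factorial : ℝ) / c^(n+1) * ∑ k ∈ Finset.range (n+1), (c*b)^k / k.factorial))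
        = (Real.exp (α*b) * Real.exp (-(c*b))) / c^(n+1) * ∑ k ∈ Finset.range (n+1), (c*b)^k / k.factorial := by
          field_simp
      _ = Real.exp (-b) / c^(n+1) * ∑ k ∈ Finset.range (n+1), (c*b)^k / k.factorial := by rw [e2]
  rw [hN, hD]
  have hS : 0 < ∑ k ∈ Finset.range (n+1), (c*b)^k / k.factorial := by
    apply Finset.sum_pos
    · intro k hk; positivity
    · exact ⟨0, Finset.mem_range.2 (Nat.succ_pos n)⟩
  have hCDF : poisCDF (c*b) n = Real.exp (-(c*b)) * ∑ k ∈ Finset.range (n+1), (c*b)^k / k.factorial := by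
    rw [poisCDF, Finset.mul_sum]
    refine Finset.sum_congr rfl fun k hk => ?_
    rw [pois]; ring
  rw [hCDF, pois]
  rw [div_eq_div_iff (by positivity) (by positivity)]
  rw [mul_pow]
  field_simp
  ring
end

section
/- For the estimator p̂(n) = f_b(n)/F_b(n) and Bayes estimators p̂_α(n) = f_{(1+α)b}(n)/F_{(1+α)b}(n), the integrated squared difference E^α[(p̂_α − p̂)²] = ∫₀^∞ Σ_{n=0}^∞ (p̂_α(n) − p̂(n))² f_{b+θ}(n) e^{-αθ} dθ tends to 0 as α → 0⁺. -/
open MeasureTheory Real Filter Topology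

noncomputable def phatA (b α : ℝ) (n : ℕ) : ℝ :=
  pois ((1 + α) * b) n / poisCDF ((1 + α) * b) n

lemma pois_nonneg {m : ℝ} (hm : 0 ≤ m) (n : ℕ) : 0 ≤ pois m n := by
  unfold pois; positivity

lemma pois_zero_pos (m : ℝ) : 0 < pois m 0 := by
  simp [pois, Real.exp_pos]

lemma pois_zero_le_poisCDF {m : ℝ} (hm : 0 ≤ m) (n : ℕ) : pois m 0 ≤ poisCDF m n :=
  Finset.single_le_sum (fun k _ => pois_nonneg hm k) (Finset.mem_range.mpr (Nat.succ_pos n))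

lemma poisCDF_pos {m : ℝ} (hm : 0 ≤ m) (n : ℕ) : 0 < poisCDF m n :=
  lt_of_lt_of_le (pois_zero_pos m) (pois_zero_le_poisCDF hm n)

lemma ratio_le {m : ℝ} (hm : 0 ≤ m) (n : ℕ) :
    pois m n / poisCDF m n ≤ m ^ n / n.factorial := by
  have h0 := pois_zero_pos m
  have h1 := pois_zero_le_poisCDF hm n
  calc pois m n / poisCDF m n ≤ pois m n / pois m 0 := by
        gcongr; exact pois_nonneg hm n
    _ = m ^ n / n.factorial := by
        simp only [pois, pow_zero, Nat.factorial_zero, Nat.cast_one, div_one, one_mul]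
        rw [div_div, mul_comm (n.factorial : ℝ) (Real.exp (-m)), ← div_div,
          mul_div_assoc, div_self (Real.exp_ne_zero _), mul_one]

lemma phatA_nonneg {b : ℝ} (hb : 0 < b) {α : ℝ} (hα : 0 ≤ α) (n : ℕ) :
    0 ≤ phatA b α n := by
  have hm : (0:ℝ) ≤ (1 + α) * b := by positivity
  exact div_nonneg (pois_nonneg hm n) (poisCDF_pos hm n).le

lemma phatA_le {b : ℝ} (hb : 0 < b) {α : ℝ} (hα0 : 0 ≤ α) (hα1 : α ≤ 1) (n : ℕ) :
    phatA b α n ≤ (2 * b) ^ n / n.factorial := by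
  have hm : (0:ℝ) ≤ (1 + α) * b := by positivity
  refine (ratio_le hm n).trans ?_
  gcongr
  nlinarith

lemma pois_le_exp {b : ℝ} (hb : 0 < b) {θ : ℝ} (hθ : 0 < θ) (n : ℕ) :
    pois (b + θ) n ≤ 2 ^ n * Real.exp (-(1 / 2) * θ) := by
  have ht : 0 < b + θ := by linarith
  have h1 : ((b + θ) / 2) ^ n / n.factorial ≤ Real.exp ((b + θ) / 2) :=
    Real.pow_div_factorial_le_exp _ (by positivity) n
  have h2 : (b + θ) ^ n / n.factorial ≤ 2 ^ n * Real.exp ((b + θ) / 2) := by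
    have e1 : (b + θ) ^ n / (n.factorial : ℝ) = 2 ^ n * (((b + θ) / 2) ^ n / n.factorial) := by
      rw [div_pow]
      field_simp
    rw [e1]
    have h2n : (0:ℝ) ≤ 2 ^ n := by positivity
    exact mul_le_mul_of_nonneg_left h1 h2n
  calc pois (b + θ) n = (b + θ) ^ n / n.factorial * Real.exp (-(b + θ)) := by
        unfold pois; ring
    _ ≤ 2 ^ n * Real.exp ((b + θ) / 2) * Real.exp (-(b + θ)) :=
        mul_le_mul_of_nonneg_right h2 (Real.exp_nonneg _)
    _ = 2 ^ n * Real.exp (-((b + θ) / 2)) := by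
        rw [mul_assoc, ← Real.exp_add]; ring_nf
    _ ≤ 2 ^ n * Real.exp (-(1 / 2) * θ) := by
        have : -((b + θ) / 2) ≤ -(1 / 2) * θ := by nlinarith
        have h2n : (0:ℝ) ≤ 2 ^ n := by positivity
        exact mul_le_mul_of_nonneg_left (Real.exp_le_exp.mpr this) h2n


lemma Dsum (b : ℝ) : Summable (fun n : ℕ => 4 * (8 * b ^ 2) ^ n / n.factorial) := by
  have := (Real.summable_pow_div_factorial (8 * b ^ 2)).mul_left 4
  simpa [mul_div_assoc] using this

lemma term_bound {b : ℝ} (hb : 0 < b) {α : ℝ} (hα0 : 0 ≤ α) (hα1 : α ≤ 1) (n : ℕ) :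
    (phatA b α n - phatA b 0 n) ^ 2 * 2 ^ n ≤ 4 * (8 * b ^ 2) ^ n / n.factorial := by
  have h1 := phatA_le hb hα0 hα1 n
  have h2 := phatA_le hb le_rfl zero_le_one n
  have h1' := phatA_nonneg hb hα0 n
  have h2' := phatA_nonneg hb le_rfl n
  set x := phatA b α n
  set y := phatA b 0 n
  set c := (2 * b) ^ n / (n.factorial : ℝ) with hc
  have hsq : (x - y) ^ 2 ≤ 4 * c ^ 2 := by nlinarith
  have hfac : (1:ℝ) ≤ n.factorial := by
    exact_mod_cast Nat.one_le_iff_ne_zero.mpr n.factorial_ne_zero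
  have e1 : ((2 * b) ^ n) ^ 2 * (2:ℝ) ^ n = (8 * b ^ 2) ^ n := by
    rw [← pow_mul, mul_comm n 2, pow_mul, ← mul_pow]
    congr 1; ring
  have key : 4 * c ^ 2 * 2 ^ n ≤ 4 * (8 * b ^ 2) ^ n / n.factorial := by
    rw [hc, div_pow]
    have hfac2 : (n.factorial:ℝ) ≤ ((n.factorial:ℝ)) ^ 2 := by nlinarith
    have hx : (0:ℝ) ≤ (8 * b ^ 2) ^ n := by positivity
    calc 4 * (((2 * b) ^ n) ^ 2 / ((n.factorial:ℝ)) ^ 2) * 2 ^ n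
        = 4 * ((8 * b ^ 2) ^ n / ((n.factorial:ℝ)) ^ 2) := by rw [← e1]; ring
      _ ≤ 4 * ((8 * b ^ 2) ^ n / (n.factorial:ℝ)) := by gcongr
      _ = 4 * (8 * b ^ 2) ^ n / n.factorial := by ring
  have h2n : (0:ℝ) ≤ 2 ^ n := by positivity
  calc (x - y) ^ 2 * 2 ^ n ≤ 4 * c ^ 2 * 2 ^ n := mul_le_mul_of_nonneg_right hsq h2n
    _ ≤ 4 * (8 * b ^ 2) ^ n / n.factorial := key

lemma Ttend {b : ℝ} (hb : 0 < b) :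
    Tendsto (fun α : ℝ => ∑' n : ℕ, (phatA b α n - phatA b 0 n) ^ 2 * 2 ^ n)
      (nhdsWithin 0 (Set.Ioi 0)) (nhds 0) := by
  have h0 : Tendsto (fun α : ℝ => ∑' n : ℕ, (phatA b α n - phatA b 0 n) ^ 2 * 2 ^ n)
      (nhdsWithin 0 (Set.Ioi 0)) (nhds (∑' _ : ℕ, (0:ℝ))) := by
    apply tendsto_tsum_of_dominated_convergence (Dsum b)
    · intro n
      have hcm : Continuous fun α : ℝ => (1 + α) * b := by continuity
      have hp : ∀ k : ℕ, Continuous fun α : ℝ => pois ((1 + α) * b) k := by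
        intro k
        unfold pois
        exact ((hcm.pow k).mul (Real.continuous_exp.comp hcm.neg)).div_const _
      have hq : Continuous fun α : ℝ => poisCDF ((1 + α) * b) n := by
        unfold poisCDF
        exact continuous_finset_sum _ fun k _ => hp k
      have hne : poisCDF ((1 + (0:ℝ)) * b) n ≠ 0 := by
        have : (0:ℝ) ≤ (1 + (0:ℝ)) * b := by linarith
        exact (poisCDF_pos this n).ne'
      have hc : ContinuousAt (fun α : ℝ => phatA b α n) 0 := by
        unfold phatA
        exact ((hp n).continuousAt).div hq.continuousAt hne
      have hc2 : ContinuousAt (fun α : ℝ => (phatA b α n - phatA b 0 n) ^ 2 * 2 ^ n) 0 :=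
        (((hc.sub continuousAt_const).pow 2).mul continuousAt_const)
      have := hc2.tendsto.mono_left
        (nhdsWithin_le_nhds : nhdsWithin (0:ℝ) (Set.Ioi 0) ≤ nhds 0)
      simpa using this
    · filter_upwards [Ioo_mem_nhdsGT one_pos] with α hα n
      rw [Real.norm_eq_abs, abs_of_nonneg (by positivity)]
      exact term_bound hb hα.1.le hα.2.le n
  simpa using h0

lemma upper_bound {b : ℝ} (hb : 0 < b) {α : ℝ} (hα0 : 0 < α) (hα1 : α ≤ 1) :
    (∫ θ in Set.Ioi (0:ℝ),
      (∑' n : ℕ, (phatA b α n - phatA b 0 n) ^ 2 * pois (b + θ) n) * Real.exp (-α * θ))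
      ≤ 2 * ∑' n : ℕ, (phatA b α n - phatA b 0 n) ^ 2 * 2 ^ n := by
  set T := ∑' n : ℕ, (phatA b α n - phatA b 0 n) ^ 2 * 2 ^ n with hT
  have hTn : ∀ n : ℕ, 0 ≤ (phatA b α n - phatA b 0 n) ^ 2 * 2 ^ n := fun n => by positivity
  have hTsum : Summable fun n : ℕ => (phatA b α n - phatA b 0 n) ^ 2 * 2 ^ n :=
    (Dsum b).of_nonneg_of_le hTn (term_bound hb hα0.le hα1)
  have hTnonneg : 0 ≤ T := tsum_nonneg hTn
  have hpoint : ∀ θ ∈ Set.Ioi (0:ℝ),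
      (∑' n : ℕ, (phatA b α n - phatA b 0 n) ^ 2 * pois (b + θ) n) * Real.exp (-α * θ)
        ≤ T * Real.exp (-(1 / 2) * θ) := by
    intro θ hθ
    have hθ' : (0:ℝ) < θ := hθ
    have hbθ : (0:ℝ) ≤ b + θ := by linarith
    have hgsum : Summable fun n : ℕ =>
        (phatA b α n - phatA b 0 n) ^ 2 * 2 ^ n * Real.exp (-(1 / 2) * θ) :=
      hTsum.mul_right _
    have hle : ∀ n : ℕ, (phatA b α n - phatA b 0 n) ^ 2 * pois (b + θ) n
        ≤ (phatA b α n - phatA b 0 n) ^ 2 * 2 ^ n * Real.exp (-(1 / 2) * θ) := by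
      intro n
      rw [mul_assoc]
      exact mul_le_mul_of_nonneg_left (pois_le_exp hb hθ' n) (sq_nonneg _)
    have hfsum : Summable fun n : ℕ => (phatA b α n - phatA b 0 n) ^ 2 * pois (b + θ) n :=
      hgsum.of_nonneg_of_le (fun n => mul_nonneg (sq_nonneg _) (pois_nonneg hbθ n)) hle
    have hS1 : (∑' n : ℕ, (phatA b α n - phatA b 0 n) ^ 2 * pois (b + θ) n)
        ≤ T * Real.exp (-(1 / 2) * θ) := by
      have := Summable.tsum_le_tsum hle hfsum hgsum
      rwa [tsum_mul_right] at this
    have hSnn : 0 ≤ ∑' n : ℕ, (phatA b α n - phatA b 0 n) ^ 2 * pois (b + θ) n :=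
      tsum_nonneg fun n => mul_nonneg (sq_nonneg _) (pois_nonneg hbθ n)
    have hexp1 : Real.exp (-α * θ) ≤ 1 := by
      rw [Real.exp_le_one_iff]
      nlinarith
    calc (∑' n : ℕ, (phatA b α n - phatA b 0 n) ^ 2 * pois (b + θ) n) * Real.exp (-α * θ)
        ≤ ∑' n : ℕ, (phatA b α n - phatA b 0 n) ^ 2 * pois (b + θ) n :=
          mul_le_of_le_one_right hSnn hexp1
      _ ≤ T * Real.exp (-(1 / 2) * θ) := hS1
  have hbase : IntegrableOn (fun θ : ℝ => Real.exp (-(1 / 2) * θ)) (Set.Ioi 0) :=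
    exp_neg_integrableOn_Ioi 0 (by norm_num : (0:ℝ) < 1 / 2)
  have hint : IntegrableOn (fun θ : ℝ => T * Real.exp (-(1 / 2) * θ)) (Set.Ioi 0) :=
    hbase.const_mul T
  have hmono : (∫ θ in Set.Ioi (0:ℝ),
      (∑' n : ℕ, (phatA b α n - phatA b 0 n) ^ 2 * pois (b + θ) n) * Real.exp (-α * θ))
      ≤ ∫ θ in Set.Ioi (0:ℝ), T * Real.exp (-(1 / 2) * θ) := by
    apply integral_mono_of_nonneg
    · filter_upwards [ae_restrict_mem measurableSet_Ioi] with θ hθ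
      have hbθ : (0:ℝ) ≤ b + θ := by
        have : (0:ℝ) < θ := hθ
        linarith
      exact mul_nonneg (tsum_nonneg fun n => mul_nonneg (sq_nonneg _) (pois_nonneg hbθ n))
        (Real.exp_nonneg _)
    · exact hint
    · filter_upwards [ae_restrict_mem measurableSet_Ioi] with θ hθ
      exact hpoint θ hθ
  have hval : (∫ θ in Set.Ioi (0:ℝ), T * Real.exp (-(1 / 2) * θ)) = 2 * T := by
    rw [MeasureTheory.integral_const_mul]
    have h2 := integral_comp_mul_left_Ioi (fun x : ℝ => Real.exp (-x)) 0
      (by norm_num : (0:ℝ) < 1 / 2)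
    simp only [mul_zero, smul_eq_mul] at h2
    simp only [neg_mul]
    rw [h2, integral_exp_neg_Ioi]
    norm_num
    ring
  rw [hval] at hmono
  exact hmono

theorem stmt_6 (b : ℝ) (hb : 0 < b) :
    Tendsto
      (fun α : ℝ =>
        ∫ θ in Set.Ioi (0 : ℝ),
          (∑' n : ℕ, (phatA b α n - phatA b 0 n) ^ 2 * pois (b + θ) n) * Real.exp (-α * θ))
      (nhdsWithin 0 (Set.Ioi 0)) (nhds 0) := by
  have hE0 : ∀ α : ℝ, 0 ≤ ∫ θ in Set.Ioi (0:ℝ),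
      (∑' n : ℕ, (phatA b α n - phatA b 0 n) ^ 2 * pois (b + θ) n) * Real.exp (-α * θ) := by
    intro α
    apply setIntegral_nonneg measurableSet_Ioi
    intro θ hθ
    have hbθ : (0:ℝ) ≤ b + θ := by
      have : (0:ℝ) < θ := hθ
      linarith
    exact mul_nonneg (tsum_nonneg fun n => mul_nonneg (sq_nonneg _) (pois_nonneg hbθ n))
      (Real.exp_nonneg _)
  have hEle : ∀ᶠ α in nhdsWithin (0:ℝ) (Set.Ioi 0), (∫ θ in Set.Ioi (0:ℝ),
      (∑' n : ℕ, (phatA b α n - phatA b 0 n) ^ 2 * pois (b + θ) n) * Real.exp (-α * θ))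
      ≤ 2 * ∑' n : ℕ, (phatA b α n - phatA b 0 n) ^ 2 * 2 ^ n := by
    filter_upwards [Ioo_mem_nhdsGT one_pos] with α hα
    exact upper_bound hb hα.1 hα.2.le
  have h2T : Tendsto (fun α : ℝ => 2 * ∑' n : ℕ, (phatA b α n - phatA b 0 n) ^ 2 * 2 ^ n)
      (nhdsWithin 0 (Set.Ioi 0)) (nhds 0) := by
    have := (Ttend hb).const_mul 2
    simpa using this
  exact tendsto_of_tendsto_of_tendsto_of_le_of_le' tendsto_const_nhds h2T
    (Eventually.of_forall hE0) hEle
end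

section
/- If a sequence of probability measures G_k on [b, ∞), b ≥ 1, satisfies ∫ zⁿ dG_k(z) → mⁿ(b) for every n ≥ 0, where mⁿ(b) = bⁿ for n ≤ ⌊b⌋ and mⁿ(b) = nⁿ for n > ⌊b⌋, then a contradiction arises: no limiting distribution with these moments exists (since the first moment b forces degeneracy at b, implying all moments equal bⁿ, contradicting mⁿ(b) = nⁿ for large n). -/
/-!
Since the measures live on `[b, ∞)` and their means tend to `b`, their mass concentrates at `b`;
a bounded higher moment prevents mass from escaping to infinity, so any limit of the moments `∫ zⁿ⁺¹`
is at most `bⁿ⁺¹`. With `N = ⌊b⌋` this contradicts `∫ zᴺ⁺¹ → (N + 1)ᴺ⁺¹ > bᴺ⁺¹`.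
Quantitatively, `zⁿ⁺¹ - bⁿ⁺¹ ≤ (n + 1) zⁿ (z - b)` and AM-GM split the right-hand side into
`(z - b) / (4δ)`, controlled by the first moment, and `δ (n + 1)² z²ⁿ⁺¹`, controlled by the
higher moment; then let `δ → 0`.
-/

open MeasureTheory Filter Topology

lemma pow_succ_sub_pow_succ_le {b z δ : ℝ} (hb : 0 ≤ b) (hbz : b ≤ z) (hδ : 0 < δ) (n : ℕ) :
    z ^ (n + 1) - b ^ (n + 1) ≤ (4 * δ)⁻¹ * (z - b) + δ * (n + 1) ^ 2 * z ^ (2 * n + 1) := by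
  have hz : 0 ≤ z := hb.trans hbz
  have hmvt : z ^ (n + 1) - b ^ (n + 1) ≤ (z - b) * ((n + 1) * z ^ n) := by
    have := (le_abs_self _).trans (abs_pow_sub_pow_le z b (n + 1))
    rwa [abs_of_nonneg (sub_nonneg.2 hbz), abs_of_nonneg hz, abs_of_nonneg hb,
      max_eq_left hbz, Nat.add_sub_cancel, Nat.cast_succ, mul_assoc] at this
  have hamgm : ∀ a : ℝ, a ≤ (4 * δ)⁻¹ + δ * a ^ 2 := fun a => by
    have h4δ : 0 < 4 * δ := by positivity
    rw [← sub_nonneg]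
    have : (4 * δ)⁻¹ + δ * a ^ 2 - a = (4 * δ)⁻¹ * (2 * δ * a - 1) ^ 2 := by
      field_simp
      ring
    rw [this]
    positivity
  calc z ^ (n + 1) - b ^ (n + 1) ≤ (z - b) * ((4 * δ)⁻¹ + δ * ((n + 1) * z ^ n) ^ 2) :=
        hmvt.trans (mul_le_mul_of_nonneg_left (hamgm _) (sub_nonneg.2 hbz))
    _ = (4 * δ)⁻¹ * (z - b) + δ * (n + 1) ^ 2 * (z ^ (2 * n) * (z - b)) := by ring
    _ ≤ (4 * δ)⁻¹ * (z - b) + δ * (n + 1) ^ 2 * z ^ (2 * n + 1) := by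
        rw [pow_succ z (2 * n)]
        gcongr
        linarith

lemma integral_pow_succ_le {μ : Measure ℝ} [IsProbabilityMeasure μ] {b δ : ℝ} (hb : 0 ≤ b)
    (hsupp : ∀ᵐ z ∂μ, b ≤ z) (hδ : 0 < δ) (n : ℕ) (h1 : Integrable (fun z => z) μ)
    (h2 : Integrable (fun z => z ^ (2 * n + 1)) μ) :
    ∫ z, z ^ (n + 1) ∂μ ≤
      b ^ (n + 1) + (4 * δ)⁻¹ * (∫ z, z ∂μ - b) + δ * (n + 1) ^ 2 * ∫ z, z ^ (2 * n + 1) ∂μ := by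
  have hI1 : Integrable (fun z => (4 * δ)⁻¹ * (z - b)) μ :=
    (h1.sub (integrable_const b)).const_mul _
  have hI2 : Integrable (fun z => δ * (n + 1) ^ 2 * z ^ (2 * n + 1)) μ := h2.const_mul _
  have hI01 : Integrable (fun z => b ^ (n + 1) + (4 * δ)⁻¹ * (z - b)) μ :=
    (integrable_const _).add hI1
  calc ∫ z, z ^ (n + 1) ∂μ
      ≤ ∫ z, b ^ (n + 1) + (4 * δ)⁻¹ * (z - b) + δ * (n + 1) ^ 2 * z ^ (2 * n + 1) ∂μ := by
        refine integral_mono_of_nonneg ?_ (hI01.add hI2) ?_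
        · filter_upwards [hsupp] with z hz using pow_nonneg (hb.trans hz) _
        · filter_upwards [hsupp] with z hz
          linarith [pow_succ_sub_pow_succ_le hb hz hδ n]
    _ = _ := by
        rw [integral_add hI01 hI2, integral_add (integrable_const _) hI1,
          integral_const_mul, integral_const_mul, integral_sub h1 (integrable_const b)]
        simp

lemma eventually_integrable_of_tendsto_integral {ι α : Type*} [MeasurableSpace α] {l : Filter ι}
    {μ : ι → Measure α} {f : α → ℝ} {c : ℝ} (hc : c ≠ 0)
    (h : Tendsto (fun i => ∫ x, f x ∂μ i) l (𝓝 c)) : ∀ᶠ i in l, Integrable f (μ i) :=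
  (h.eventually_ne hc).mono fun _ hi => by_contra fun hf => hi (integral_undef hf)

lemma le_of_tendsto_integral_pow_succ {ι : Type*} {l : Filter ι} [l.NeBot] {μ : ι → Measure ℝ}
    [∀ i, IsProbabilityMeasure (μ i)] {b c L : ℝ} (hb : 0 < b) (hsupp : ∀ i, ∀ᵐ z ∂μ i, b ≤ z)
    (n : ℕ) (h1 : Tendsto (fun i => ∫ z, z ∂μ i) l (𝓝 b))
    (h2 : Tendsto (fun i => ∫ z, z ^ (2 * n + 1) ∂μ i) l (𝓝 c)) (hc : c ≠ 0)
    (hL : Tendsto (fun i => ∫ z, z ^ (n + 1) ∂μ i) l (𝓝 L)) :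
    L ≤ b ^ (n + 1) := by
  have hδ : ∀ δ : ℝ, 0 < δ → L ≤ b ^ (n + 1) + δ * ((n + 1) ^ 2 * c) := fun δ hδ => by
    have hlim := ((tendsto_const_nhds (x := b ^ (n + 1))).add
      ((h1.sub_const b).const_mul (4 * δ)⁻¹)).add (h2.const_mul (δ * (n + 1) ^ 2))
    have := le_of_tendsto_of_tendsto hL hlim <| by
      filter_upwards [eventually_integrable_of_tendsto_integral hb.ne' h1,
        eventually_integrable_of_tendsto_integral hc h2] with i hi1 hi2
      exact integral_pow_succ_le hb.le (hsupp i) hδ n hi1 hi2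
    linarith
  have hlim : Tendsto (fun δ : ℝ => b ^ (n + 1) + δ * ((n + 1) ^ 2 * c)) (𝓝[>] 0)
      (𝓝 (b ^ (n + 1))) := by
    have : Continuous fun δ : ℝ => b ^ (n + 1) + δ * ((n + 1) ^ 2 * c) := by fun_prop
    simpa using (this.tendsto 0).mono_left nhdsWithin_le_nhds
  exact ge_of_tendsto hlim (eventually_nhdsWithin_of_forall hδ)

theorem stmt_10 (b : ℝ) (hb : 1 ≤ b) :
    ¬ ∃ G : ℕ → Measure ℝ, (∀ k, IsProbabilityMeasure (G k)) ∧
      (∀ k, (G k) (Set.Ici b)ᶜ = 0) ∧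
      (∀ n : ℕ, Tendsto (fun k => ∫ z, z ^ n ∂(G k)) atTop
        (nhds (if n ≤ Nat.floor b then b ^ n else (n : ℝ) ^ n))) := by
  rintro ⟨G, hprob, hsupp, hmom⟩
  set N := ⌊b⌋₊
  have hN : 1 ≤ N := Nat.one_le_floor_iff b |>.mpr hb
  have h1 : Tendsto (fun k => ∫ z, z ∂G k) atTop (𝓝 b) := by
    simpa [if_pos hN] using hmom 1
  have h2 : Tendsto (fun k => ∫ z, z ^ (2 * N + 1) ∂G k) atTop
      (𝓝 ((2 * N + 1 : ℕ) ^ (2 * N + 1))) := by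
    simpa only [if_neg (show ¬2 * N + 1 ≤ N by omega)] using hmom (2 * N + 1)
  have hL : Tendsto (fun k => ∫ z, z ^ (N + 1) ∂G k) atTop (𝓝 ((N + 1 : ℕ) ^ (N + 1))) := by
    simpa only [if_neg (show ¬N + 1 ≤ N by omega)] using hmom (N + 1)
  have hae : ∀ k, ∀ᵐ z ∂G k, b ≤ z := fun k => mem_ae_iff.2 (hsupp k)
  have hle := le_of_tendsto_integral_pow_succ (by linarith) hae N h1 h2 (by positivity) hL
  have hlt : b ^ (N + 1) < ((N + 1 : ℕ) : ℝ) ^ (N + 1) := by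
    push_cast
    exact pow_lt_pow_left₀ (Nat.lt_floor_add_one b) (by linarith) N.succ_ne_zero
  exact hle.not_gt hlt
end

section
/- For b ≥ 1, the maximum likelihood estimator p_θ̂(n) = bⁿ/(max(b,n))ⁿ is an inadmissible estimator of p_θ(n) = bⁿ/(b+θ)ⁿ under squared error loss. -/
open Real

/-- risk of an estimator `p` under squared error loss at signal mean `θ` -/
noncomputable def risk (b : ℝ) (p : ℕ → ℝ) (θ : ℝ) : ℝ :=
  ∑' n : ℕ, (p n - b ^ n / (b + θ) ^ n) ^ 2 * pois (b + θ) n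

set_option maxHeartbeats 1000000


lemma pow_sub_pow_le_lin (b s : ℝ) (hb : 0 ≤ b) (hs : b ≤ s) :
    ∀ n : ℕ, s ^ (n+1) - b ^ (n+1) ≤ (n+1) * s ^ n * (s - b) := by
  intro n
  induction n with
  | zero => simp
  | succ n ih =>
    have hbs : b ^ (n+1) ≤ s ^ (n+1) := pow_le_pow_left₀ hb hs _
    have hs0 : 0 ≤ s := le_trans hb hs
    have h1 : s ^ (n+2) - b ^ (n+2) = s * (s ^ (n+1) - b ^ (n+1)) + b ^ (n+1) * (s - b) := by
      ring
    have h2 : s * (s ^ (n+1) - b ^ (n+1)) ≤ s * ((n+1) * s ^ n * (s - b)) :=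
      mul_le_mul_of_nonneg_left ih hs0
    have h3 : b ^ (n+1) * (s - b) ≤ s ^ (n+1) * (s - b) :=
      mul_le_mul_of_nonneg_right hbs (by linarith)
    have h4 : s * ((n+1) * s ^ n * (s - b)) = (n+1) * s ^ (n+1) * (s-b) := by ring
    push_cast
    nlinarith [h1, h2, h3, h4]

lemma pow_sub_pow_ge_lin (b s : ℝ) (hb : 0 ≤ b) (hs : b ≤ s) (n : ℕ) :
    s ^ n * (s - b) ≤ s ^ (n+1) - b ^ (n+1) := by
  have hbs : b ^ n ≤ s ^ n := pow_le_pow_left₀ hb hs _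
  have h : b ^ (n+1) ≤ b * s ^ n := by
    rw [pow_succ']
    exact mul_le_mul_of_nonneg_left hbs hb
  nlinarith [h, pow_succ s n]

lemma key (b q r a ε δ S : ℝ) (n : ℕ)
    (hb : 1 ≤ b)
    (hq0 : 0 ≤ q) (hq1 : q < 1)
    (hr0 : 0 ≤ r)
    (hε0 : 0 < ε) (hε1 : ε ≤ 1) (hεq : ε ≤ 1 - q)
    (ha0 : 0 ≤ a) (ha1 : a ≤ 1)
    (hδ0 : 0 ≤ δ) (hδr : δ ≤ r)
    (haF : a * ((n+1).factorial : ℝ) = 3*ε*((n:ℝ)+1)*S^n)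
    (hδS : δ*r*S = 3*ε*((n:ℝ)+1)*((n:ℝ)+2))
    (hab : ((n+2).factorial : ℝ)*a^2*b ≤ ((n:ℝ)+2)*ε*(1-q)*b^(n+1)/4)
    (hδb : 3*δ*b^(n+2) ≤ ((n:ℝ)+2)*ε*(1-q)*b^(n+1)/2)
    (s : ℝ) (hs : b ≤ s) :
    ((n+2).factorial : ℝ)*(a*(a-2)*s + 2*a*b)
      + ((n:ℝ)+2)*(ε*(ε+2*q)*s^(n+1) - 2*ε*b^(n+1))
      + (δ*(δ-2*r)*s^(n+2) + 2*δ*b^(n+2)) < 0 := by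
  have hb0 : (0:ℝ) < b := by linarith
  have hs0 : (0:ℝ) < s := lt_of_lt_of_le hb0 hs
  have hsnn : (0:ℝ) ≤ s := hs0.le
  have hFm : (0:ℝ) < ((n+1).factorial : ℝ) := by exact_mod_cast Nat.factorial_pos _
  have hFk : (0:ℝ) < ((n+2).factorial : ℝ) := by exact_mod_cast Nat.factorial_pos _
  have hFkFm : ((n+2).factorial : ℝ) = ((n:ℝ)+2) * ((n+1).factorial : ℝ) := by
    rw [show n+2 = (n+1)+1 from rfl, Nat.factorial_succ]
    push_cast; ring
  have h1q : (0:ℝ) < 1 - q := by linarith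
  -- the bracket
  set Br : ℝ := ((n+2).factorial : ℝ)*a*(a-2) + ((n:ℝ)+2)*(ε*(ε+2*q))*((n:ℝ)+1)*s^n
      - δ*(2*r-δ)*s^(n+1) with hBrdef
  -- W(s) ≤ W(b) + (s-b) * Br
  have P1 : s ^ (n+1) - b ^ (n+1) ≤ (n+1) * s ^ n * (s - b) := pow_sub_pow_le_lin b s hb0.le hs n
  have P2 : s ^ (n+1) * (s - b) ≤ s ^ (n+2) - b ^ (n+2) := pow_sub_pow_ge_lin b s hb0.le hs (n+1)
  have c1 : (0:ℝ) ≤ ((n:ℝ)+2)*(ε*(ε+2*q)) := by positivity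
  have c2 : (0:ℝ) ≤ δ*(2*r-δ) := mul_nonneg hδ0 (by linarith)
  have e1 := mul_le_mul_of_nonneg_left P1 c1
  have e2 := mul_le_mul_of_nonneg_left P2 c2
  have hW : ((n+2).factorial : ℝ)*(a*(a-2)*s + 2*a*b)
      + ((n:ℝ)+2)*(ε*(ε+2*q)*s^(n+1) - 2*ε*b^(n+1))
      + (δ*(δ-2*r)*s^(n+2) + 2*δ*b^(n+2))
      ≤ (((n+2).factorial : ℝ)*(a*(a-2)*b + 2*a*b)
      + ((n:ℝ)+2)*(ε*(ε+2*q)*b^(n+1) - 2*ε*b^(n+1))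
      + (δ*(δ-2*r)*b^(n+2) + 2*δ*b^(n+2))) + (s-b)*Br := by
    rw [hBrdef]
    push_cast at e1
    linarith [e1, e2]
  -- Br ≤ 0
  have t1 : ε*(ε+2*q) ≤ 3*ε := by nlinarith
  have hBr : Br ≤ 0 := by
    rcases le_total s S with hsS | hsS
    · -- s ≤ S
      have hsn : s^n ≤ S^n := pow_le_pow_left₀ hsnn hsS n
      have t2 : ε*(ε+2*q)*s^n ≤ 3*ε*S^n := by
        have := mul_le_mul t1 hsn (pow_nonneg hsnn n) (by linarith)
        linarith
      have t3 : ((n:ℝ)+2)*(ε*(ε+2*q))*((n:ℝ)+1)*s^n ≤ a * ((n+2).factorial : ℝ) := by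
        have h5 := mul_le_mul_of_nonneg_left t2
          (show (0:ℝ) ≤ ((n:ℝ)+2)*((n:ℝ)+1) by positivity)
        have haF2 : ((n:ℝ)+2) * (a * ((n+1).factorial:ℝ))
            = ((n:ℝ)+2) * (3*ε*((n:ℝ)+1)*S^n) := by rw [haF]
        rw [hFkFm]
        linarith [h5, haF2]
      have t4 : (0:ℝ) ≤ δ*(2*r-δ)*s^(n+1) := mul_nonneg c2 (pow_nonneg hsnn _)
      have t5 : ((n+2).factorial : ℝ)*a*(a-2) + a*((n+2).factorial : ℝ) ≤ 0 := by
        nlinarith [mul_nonneg (mul_nonneg hFk.le ha0) (show (0:ℝ) ≤ 1-a by linarith)]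
      rw [hBrdef]; linarith
    · -- S ≤ s
      have t5 : ((n+2).factorial : ℝ)*a*(a-2) ≤ 0 := by
        nlinarith [mul_nonneg (mul_nonneg hFk.le ha0) (show (0:ℝ) ≤ 2-a by linarith)]
      have t6 : ((n:ℝ)+2)*(ε*(ε+2*q))*((n:ℝ)+1)*s^n ≤ ((n:ℝ)+2)*(3*ε)*((n:ℝ)+1)*s^n := by
        have := mul_le_mul_of_nonneg_right
          (mul_le_mul_of_nonneg_left t1 (show (0:ℝ) ≤ ((n:ℝ)+2) by positivity))
          (mul_nonneg (show (0:ℝ) ≤ ((n:ℝ)+1) by positivity) (pow_nonneg hsnn n))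
        linarith [this]
      have u1 : (δ*r*S)*s^n ≤ δ*(2*r-δ)*s^(n+1) := by
        rw [pow_succ]
        have H1 : (0:ℝ) ≤ δ*(r-δ)*s*s^n := mul_nonneg (mul_nonneg (mul_nonneg hδ0
          (show (0:ℝ) ≤ r-δ by linarith)) hsnn) (pow_nonneg hsnn n)
        have H2 : (0:ℝ) ≤ δ*r*(s-S)*s^n := mul_nonneg (mul_nonneg (mul_nonneg hδ0 hr0)
          (show (0:ℝ) ≤ s-S by linarith)) (pow_nonneg hsnn n)
        nlinarith [H1, H2]
      have u2 : (3*ε*((n:ℝ)+1)*((n:ℝ)+2))*s^n ≤ δ*(2*r-δ)*s^(n+1) := by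
        rw [← hδS]; exact u1
      rw [hBrdef]
      linarith [t5, t6, u2]
  -- W(b) < 0
  have hX : (0:ℝ) < ((n:ℝ)+2)*ε*(1-q)*b^(n+1) :=
    mul_pos (mul_pos (mul_pos (by positivity) hε0) h1q) (pow_pos hb0 _)
  have w1 : ((n+2).factorial : ℝ)*(a*(a-2)*b + 2*a*b) ≤ ((n:ℝ)+2)*ε*(1-q)*b^(n+1)/4 := by
    have he : ((n+2).factorial : ℝ)*(a*(a-2)*b + 2*a*b) = ((n+2).factorial : ℝ)*a^2*b := by ring
    rw [he]; exact hab
  have hK : (0:ℝ) ≤ ((n:ℝ)+2)*ε*b^(n+1) :=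
    mul_nonneg (mul_nonneg (by positivity) hε0.le) (pow_nonneg hb0.le _)
  have w2 : ((n:ℝ)+2)*(ε*(ε+2*q)*b^(n+1) - 2*ε*b^(n+1)) ≤ -(((n:ℝ)+2)*ε*(1-q)*b^(n+1)) := by
    have hw2 : (0:ℝ) ≤ (((n:ℝ)+2)*ε*b^(n+1))*(1-q-ε) :=
      mul_nonneg hK (show (0:ℝ) ≤ 1-q-ε by linarith)
    linarith [hw2]
  have w3 : δ*(δ-2*r)*b^(n+2) ≤ 0 := by
    have hw3 : (0:ℝ) ≤ (δ*(2*r-δ))*b^(n+2) :=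
      mul_nonneg (mul_nonneg hδ0 (show (0:ℝ) ≤ 2*r-δ by linarith)) (pow_nonneg hb0.le (n+2))
    linarith [hw3]
  have w4 : 2*δ*b^(n+2) ≤ ((n:ℝ)+2)*ε*(1-q)*b^(n+1)/2 := by
    have hw4 : (0:ℝ) ≤ δ*b^(n+2) := mul_nonneg hδ0 (pow_nonneg hb0.le (n+2))
    linarith [hδb, hw4]
  have hfin : (s-b)*Br ≤ 0 := mul_nonpos_of_nonneg_of_nonpos (by linarith) hBr
  linarith [hW, w1, w2, w3, w4, hX, hfin]

lemma summable_term (b s : ℝ) (hb0 : 0 < b) (hbs : b ≤ s) (p : ℕ → ℝ)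
    (hp : ∀ n, p n ∈ Set.Icc (0:ℝ) 1) :
    Summable (fun n => (p n - b^n/s^n)^2 * pois s n) := by
  have hs0 : (0:ℝ) < s := lt_of_lt_of_le hb0 hbs
  refine Summable.of_nonneg_of_le ?_ ?_
    ((Real.summable_pow_div_factorial s).mul_right (Real.exp (-s)))
  · intro j
    have : (0:ℝ) ≤ pois s j := by unfold pois; positivity
    exact mul_nonneg (sq_nonneg _) this
  · intro j
    have hx0 : (0:ℝ) ≤ b^j/s^j := by positivity
    have hx1 : b^j/s^j ≤ 1 :=
      div_le_one_of_le₀ (pow_le_pow_left₀ hb0.le hbs j) (pow_nonneg hs0.le j)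
    obtain ⟨h0, h1⟩ := hp j
    have hpois : (0:ℝ) ≤ pois s j := by unfold pois; positivity
    have hsq : (p j - b^j/s^j)^2 ≤ 1 := by nlinarith
    calc (p j - b^j/s^j)^2 * pois s j ≤ 1 * pois s j :=
          mul_le_mul_of_nonneg_right hsq hpois
      _ = s^j/(j.factorial : ℝ) * Real.exp (-s) := by unfold pois; ring

theorem stmt_11 (b : ℝ) (hb : 1 ≤ b) :
    ∃ p : ℕ → ℝ, (∀ n, p n ∈ Set.Icc (0 : ℝ) 1) ∧
      (∀ θ : ℝ, 0 ≤ θ → risk b p θ ≤ risk b (fun n => b ^ n / max b (n : ℝ) ^ n) θ) ∧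
      (∃ θ₀ : ℝ, 0 ≤ θ₀ ∧ risk b p θ₀ < risk b (fun n => b ^ n / max b (n : ℝ) ^ n) θ₀) := by
  have hb0 : (0:ℝ) < b := by linarith
  set n : ℕ := ⌊b⌋₊ with hn_def
  have hn1 : 1 ≤ n := Nat.le_floor (by exact_mod_cast hb)
  have hbn1 : b < (n:ℝ)+1 := by
    have := Nat.lt_floor_add_one b
    push_cast at this ⊢
    linarith
  have hbn2 : b < (n:ℝ)+2 := by linarith
  have hn1R : (1:ℝ) ≤ (n:ℝ) := by exact_mod_cast hn1
  -- q and r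
  set q : ℝ := b^(n+1)/((n:ℝ)+1)^(n+1) with hq_def
  set r : ℝ := b^(n+2)/((n:ℝ)+2)^(n+2) with hr_def
  have hn1pos : (0:ℝ) < (n:ℝ)+1 := by linarith
  have hn2pos : (0:ℝ) < (n:ℝ)+2 := by linarith
  have hq0 : 0 < q := by rw [hq_def]; positivity
  have hr0 : 0 < r := by rw [hr_def]; positivity
  have hq1 : q < 1 := by
    rw [hq_def, div_lt_one (by positivity)]
    exact pow_lt_pow_left₀ hbn1 hb0.le (by omega)
  have hr1 : r < 1 := by
    rw [hr_def, div_lt_one (by positivity)]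
    exact pow_lt_pow_left₀ hbn2 hb0.le (by omega)
  have h1q : (0:ℝ) < 1 - q := by linarith
  -- S
  set S : ℝ := b + 18*((n:ℝ)+1)*b/(r*(1-q)) with hS_def
  have hrq : (0:ℝ) < r*(1-q) := mul_pos hr0 h1q
  have hS0 : (0:ℝ) < S := by
    rw [hS_def]
    have : (0:ℝ) ≤ 18*((n:ℝ)+1)*b/(r*(1-q)) := div_nonneg (by positivity) hrq.le
    linarith
  have hS1 : 18*((n:ℝ)+1)*b ≤ r*(1-q)*S := by
    have hcomp : r*(1-q)*S = r*(1-q)*b + 18*((n:ℝ)+1)*b := by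
      rw [hS_def]
      field_simp
    linarith [hcomp, mul_nonneg hrq.le hb0.le]
  -- factorials
  set Fm : ℝ := ((n+1).factorial : ℝ) with hFm_def
  set Fk : ℝ := ((n+2).factorial : ℝ) with hFk_def
  have hFm : (0:ℝ) < Fm := by rw [hFm_def]; exact_mod_cast Nat.factorial_pos _
  have hFk : (0:ℝ) < Fk := by rw [hFk_def]; exact_mod_cast Nat.factorial_pos _
  have hFkFm : Fk = ((n:ℝ)+2) * Fm := by
    rw [hFk_def, hFm_def, show n+2 = (n+1)+1 from rfl, Nat.factorial_succ]
    push_cast; ring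
  -- epsilon
  set E1 : ℝ := Fm/(3*((n:ℝ)+1)*S^n) with hE1_def
  set E2 : ℝ := r^2*S/(3*((n:ℝ)+1)*((n:ℝ)+2)) with hE2_def
  set E3 : ℝ := (1-q)*b^(n+1)*Fm/(36*((n:ℝ)+1)^2*(S^n)^2*b) with hE3_def
  have hE1pos : 0 < E1 := by rw [hE1_def]; positivity
  have hE2pos : 0 < E2 := by rw [hE2_def]; positivity
  have hE3pos : 0 < E3 := by rw [hE3_def]; positivity
  set ε : ℝ := min 1 (min (1-q) (min E1 (min E2 E3))) with hε_def
  have hε0 : 0 < ε := by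
    rw [hε_def]
    simp only [lt_min_iff]
    exact ⟨one_pos, h1q, hE1pos, hE2pos, hE3pos⟩
  have hε1 : ε ≤ 1 := min_le_left _ _
  have hεq : ε ≤ 1 - q := le_trans (min_le_right _ _) (min_le_left _ _)
  have hεE1 : ε ≤ E1 :=
    le_trans (min_le_right _ _) (le_trans (min_le_right _ _) (min_le_left _ _))
  have hεE2 : ε ≤ E2 :=
    le_trans (min_le_right _ _) (le_trans (min_le_right _ _)
      (le_trans (min_le_right _ _) (min_le_left _ _)))
  have hεE3 : ε ≤ E3 :=
    le_trans (min_le_right _ _) (le_trans (min_le_right _ _)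
      (le_trans (min_le_right _ _) (min_le_right _ _)))
  -- a and delta
  set a : ℝ := 3*ε*((n:ℝ)+1)*S^n/Fm with ha_def
  set δ : ℝ := 3*ε*((n:ℝ)+1)*((n:ℝ)+2)/(r*S) with hδ_def
  have ha0 : 0 ≤ a := by rw [ha_def]; positivity
  have hδ0 : 0 ≤ δ := by rw [hδ_def]; positivity
  have haF : a * Fm = 3*ε*((n:ℝ)+1)*S^n := by
    rw [ha_def]; field_simp
  have hδS : δ*r*S = 3*ε*((n:ℝ)+1)*((n:ℝ)+2) := by
    rw [hδ_def]; field_simp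
  have ha1 : a ≤ 1 := by
    rw [ha_def, div_le_one hFm]
    have h := mul_le_mul_of_nonneg_right hεE1
      (show (0:ℝ) ≤ 3*((n:ℝ)+1)*S^n by positivity)
    have hE1' : E1 * (3*((n:ℝ)+1)*S^n) = Fm := by
      rw [hE1_def]; field_simp
    linarith [h, hE1']
  have hδr : δ ≤ r := by
    rw [hδ_def, div_le_iff₀ (by positivity : (0:ℝ) < r*S)]
    have h := mul_le_mul_of_nonneg_right hεE2
      (show (0:ℝ) ≤ 3*((n:ℝ)+1)*((n:ℝ)+2) by positivity)
    have hE2' : E2 * (3*((n:ℝ)+1)*((n:ℝ)+2)) = r*(r*S) := by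
      rw [hE2_def]; field_simp
    linarith [h, hE2']
  -- the two scale conditions
  have h9 : 36*ε*((n:ℝ)+1)^2*(S^n)^2*b ≤ (1-q)*b^(n+1)*Fm := by
    have h := mul_le_mul_of_nonneg_left hεE3
      (show (0:ℝ) ≤ 36*((n:ℝ)+1)^2*(S^n)^2*b by positivity)
    have hE3' : (36*((n:ℝ)+1)^2*(S^n)^2*b) * E3 = (1-q)*b^(n+1)*Fm := by
      rw [hE3_def]; field_simp
    linarith [h, hE3']
  have hab : Fk*a^2*b ≤ ((n:ℝ)+2)*ε*(1-q)*b^(n+1)/4 := by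
    have H : Fm^2*(Fk*a^2*b) ≤ Fm^2*(((n:ℝ)+2)*ε*(1-q)*b^(n+1)/4) := by
      have expand : Fm^2*(Fk*a^2*b) = Fk*(a*Fm)^2*b := by ring
      rw [expand, haF, hFkFm]
      have hint := mul_le_mul_of_nonneg_left h9
        (show (0:ℝ) ≤ ε*((n:ℝ)+2)*Fm by positivity)
      linarith [hint]
    exact le_of_mul_le_mul_left H (show (0:ℝ) < Fm^2 by positivity)
  have hδb : 3*δ*b^(n+2) ≤ ((n:ℝ)+2)*ε*(1-q)*b^(n+1)/2 := by
    have H : r*S*(3*δ*b^(n+2)) ≤ r*S*(((n:ℝ)+2)*ε*(1-q)*b^(n+1)/2) := by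
      have expand : r*S*(3*δ*b^(n+2)) = 3*(δ*r*S)*b^(n+2) := by ring
      rw [expand, hδS, show n+2 = (n+1)+1 from rfl, pow_succ]
      have hint := mul_le_mul_of_nonneg_left hS1
        (show (0:ℝ) ≤ ((n:ℝ)+2)*ε*b^(n+1)/2 by positivity)
      linarith [hint]
    exact le_of_mul_le_mul_left H (show (0:ℝ) < r*S by positivity)
  -- the estimator
  set p : ℕ → ℝ := fun j =>
    if j = 1 then 1 - a else if j = n+1 then q + ε else if j = n+2 then r - δ
    else b^j / max b (j:ℝ)^j with hp_def
  set g : ℕ → ℝ := fun j => b ^ j / max b (j:ℝ) ^ j with hg_def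
  have hgmem : ∀ j, g j ∈ Set.Icc (0:ℝ) 1 := by
    intro j
    have hmx : (0:ℝ) < max b (j:ℝ) := lt_of_lt_of_le hb0 (le_max_left _ _)
    simp only [hg_def]
    constructor
    · positivity
    · exact div_le_one_of_le₀ (pow_le_pow_left₀ hb0.le (le_max_left _ _) j)
        (pow_nonneg hmx.le j)
  have hpmem : ∀ j, p j ∈ Set.Icc (0:ℝ) 1 := by
    intro j
    have hgj := hgmem j
    simp only [hg_def] at hgj
    simp only [hp_def]
    split_ifs with h1 h2 h3
    · exact ⟨by linarith, by linarith⟩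
    · exact ⟨by linarith, by linarith⟩
    · exact ⟨by linarith, by linarith [hr1.le]⟩
    · exact hgj
  have hg1 : g 1 = 1 := by
    simp only [hg_def, Nat.cast_one, pow_one, max_eq_left hb]
    exact div_self hb0.ne'
  have hgm : g (n+1) = q := by
    simp only [hg_def, hq_def]
    have hmx : max b ((n+1:ℕ):ℝ) = ((n+1:ℕ):ℝ) := max_eq_right (by push_cast; linarith)
    rw [hmx]
    push_cast
    ring
  have hgk : g (n+2) = r := by
    simp only [hg_def, hr_def]
    have hmx : max b ((n+2:ℕ):ℝ) = ((n+2:ℕ):ℝ) := max_eq_right (by push_cast; linarith)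
    rw [hmx]
    push_cast
    ring
  -- the strict risk inequality for every θ
  have hmain : ∀ θ : ℝ, 0 ≤ θ → risk b p θ < risk b g θ := by
    intro θ hθ
    set s : ℝ := b + θ with hs_def
    have hbs : b ≤ s := by rw [hs_def]; linarith
    have hs0 : (0:ℝ) < s := lt_of_lt_of_le hb0 hbs
    have hsum_p : Summable (fun j => (p j - b^j/s^j)^2 * pois s j) :=
      summable_term b s hb0 hbs p hpmem
    have hsum_g : Summable (fun j => (g j - b^j/s^j)^2 * pois s j) :=
      summable_term b s hb0 hbs g hgmem
    have hdiff : risk b p θ - risk b g θ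
        = ∑' j, ((p j - b^j/s^j)^2 * pois s j - (g j - b^j/s^j)^2 * pois s j) := by
      rw [risk, risk, ← hs_def]
      exact (Summable.tsum_sub hsum_p hsum_g).symm
    have hsupp : ∀ j ∉ ({1, n+1, n+2} : Finset ℕ),
        ((p j - b^j/s^j)^2 * pois s j - (g j - b^j/s^j)^2 * pois s j) = 0 := by
      intro j hj
      simp only [Finset.mem_insert, Finset.mem_singleton] at hj
      push_neg at hj
      obtain ⟨hj1, hjm, hjk⟩ := hj
      simp only [hp_def, hg_def, hj1, hjm, hjk, if_false, reduceIte]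
      ring
    have hsum : ∑' j, ((p j - b^j/s^j)^2 * pois s j - (g j - b^j/s^j)^2 * pois s j)
        = ∑ j ∈ ({1, n+1, n+2} : Finset ℕ),
          ((p j - b^j/s^j)^2 * pois s j - (g j - b^j/s^j)^2 * pois s j) :=
      tsum_eq_sum hsupp
    have hmem1 : (1:ℕ) ∉ ({n+1, n+2} : Finset ℕ) := by simp; omega
    have hmem2 : (n+1:ℕ) ∉ ({n+2} : Finset ℕ) := by simp
    rw [hsum] at hdiff
    simp only [Finset.sum_insert hmem1, Finset.sum_insert hmem2,
      Finset.sum_singleton] at hdiff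
    have hp1 : p 1 = 1 - a := by simp only [hp_def]; norm_num
    have hne1 : ¬(n+1 = 1) := by omega
    have hne2 : ¬(n+2 = 1) := by omega
    have hne3 : ¬(n+2 = n+1) := by omega
    have hpm : p (n+1) = q + ε := by
      simp only [hp_def, if_neg hne1, if_true]
    have hpk : p (n+2) = r - δ := by
      simp only [hp_def, if_neg hne2, if_neg hne3, if_true]
    -- key inequality
    have K := key b q r a ε δ S n hb hq0.le hq1 hr0.le hε0 hε1 hεq ha0 ha1 hδ0 hδr
      (by rw [← hFm_def]; exact haF) hδS (by rw [← hFk_def]; exact hab) hδb s hbs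
    rw [← hFk_def, hFkFm] at K
    -- identify the difference with the key expression
    have hval : ((p 1 - b^1/s^1)^2 * pois s 1 - (g 1 - b^1/s^1)^2 * pois s 1)
        + (((p (n+1) - b^(n+1)/s^(n+1))^2 * pois s (n+1)
            - (g (n+1) - b^(n+1)/s^(n+1))^2 * pois s (n+1))
        + ((p (n+2) - b^(n+2)/s^(n+2))^2 * pois s (n+2)
            - (g (n+2) - b^(n+2)/s^(n+2))^2 * pois s (n+2)))
        = Real.exp (-s) * (((n:ℝ)+2)*Fm*(a*(a-2)*s + 2*a*b)
            + ((n:ℝ)+2)*(ε*(ε+2*q)*s^(n+1) - 2*ε*b^(n+1))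
            + (δ*(δ-2*r)*s^(n+2) + 2*δ*b^(n+2))) / (((n:ℝ)+2)*Fm) := by
      rw [hp1, hpm, hpk, hg1, hgm, hgk]
      unfold pois
      rw [hFm_def]
      have hfact : ((n+2).factorial : ℝ) = ((n:ℝ)+2) * ((n+1).factorial : ℝ) := by
        rw [show n+2 = (n+1)+1 from rfl, Nat.factorial_succ]; push_cast; ring
      rw [hfact]
      have hf1 : ((1:ℕ).factorial : ℝ) = 1 := by norm_num
      rw [hf1]
      have hsn1 : s^(n+1) ≠ 0 := by positivity
      have hsn2 : s^(n+2) ≠ 0 := by positivity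
      have hFmne : ((n+1).factorial : ℝ) ≠ 0 := by
        exact_mod_cast (Nat.factorial_pos (n+1)).ne'
      field_simp
      ring
    rw [hval] at hdiff
    have hneg : Real.exp (-s) * (((n:ℝ)+2)*Fm*(a*(a-2)*s + 2*a*b)
            + ((n:ℝ)+2)*(ε*(ε+2*q)*s^(n+1) - 2*ε*b^(n+1))
            + (δ*(δ-2*r)*s^(n+2) + 2*δ*b^(n+2))) / (((n:ℝ)+2)*Fm) < 0 := by
      apply div_neg_of_neg_of_pos
      · exact mul_neg_of_pos_of_neg (Real.exp_pos _) K
      · positivity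
    linarith [hdiff, hneg]
  exact ⟨p, hpmem, fun θ hθ => (hmain θ hθ).le, 0, le_refl 0, hmain 0 (le_refl 0)⟩
end

section
/- Under the prior density e^{-αθ} on θ ∈ [0,∞) with X | θ ~ Poisson(b+θ), X = B + S with B ~ Poisson(b), S ~ Poisson(θ) independent, the posterior distribution of B given X = n is P^α(B = k | X = n) = f_{(1+α)b}(k)/F_{(1+α)b}(n) for 0 ≤ k ≤ n, i.e., B given X = n is a truncated Poisson((1+α)b) on {0,…,n}. -/
open MeasureTheory Real

/-- `P_θ(B = k, X = n)` for `k ≤ n` in the signal plus background model -/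
noncomputable def jointBX (b θ : ℝ) (k n : ℕ) : ℝ :=
  b ^ k * θ ^ (n - k) * Real.exp (-(b + θ)) / (k.factorial * (n - k).factorial)

lemma key_int (m : ℕ) {c : ℝ} (hc : 0 < c) :
    IntegrableOn (fun θ : ℝ => θ ^ m * Real.exp (-(c * θ))) (Set.Ioi 0) := by
  have h := integrableOn_rpow_mul_exp_neg_mul_rpow (p := 1) (s := m) (b := c)
    (neg_one_lt_zero.trans_le (by positivity)) one_pos hc
  refine h.congr_fun (fun θ hθ => ?_) measurableSet_Ioi
  dsimp only
  rw [Real.rpow_one, Real.rpow_natCast, neg_mul]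

lemma key_eval (m : ℕ) {c : ℝ} (hc : 0 < c) :
    ∫ θ in Set.Ioi (0:ℝ), θ ^ m * Real.exp (-(c * θ)) = m.factorial / c ^ (m + 1) := by
  have h := Real.integral_rpow_mul_exp_neg_mul_Ioi (a := m + 1) (by positivity) hc
  rw [Real.Gamma_nat_eq_factorial,
    show ((m : ℝ) + 1) = ((m + 1 : ℕ) : ℝ) by push_cast; ring, Real.rpow_natCast] at h
  push_cast at h
  rw [show (∫ θ in Set.Ioi (0:ℝ), θ ^ m * Real.exp (-(c * θ)))
      = ∫ t in Set.Ioi (0:ℝ), t ^ ((m:ℝ) + 1 - 1) * Real.exp (-(c * t)) from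
      setIntegral_congr_fun measurableSet_Ioi (fun θ hθ => by
        rw [add_sub_cancel_right, Real.rpow_natCast]), h, one_div, inv_pow]
  field_simp

lemma term_rw (b α θ : ℝ) (k n : ℕ) :
    jointBX b θ k n * Real.exp (-α * θ)
      = (b ^ k * Real.exp (-b) / (k.factorial * (n - k).factorial))
        * (θ ^ (n - k) * Real.exp (-((1 + α) * θ))) := by
  unfold jointBX
  rw [div_mul_eq_mul_div, mul_assoc, ← Real.exp_add,
    show -(b + θ) + -α * θ = -b + -((1 + α) * θ) by ring, Real.exp_add]
  ring

lemma term_eval (b α : ℝ) (hb : 0 < b) (hα : 0 ≤ α) (n k : ℕ) (hk : k ≤ n) :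
    (∫ θ in Set.Ioi (0 : ℝ), jointBX b θ k n * Real.exp (-α * θ))
      = pois ((1 + α) * b) k * (Real.exp (α * b) / (1 + α) ^ (n + 1)) := by
  have hc : (0:ℝ) < 1 + α := by linarith
  simp_rw [term_rw]
  rw [integral_const_mul, key_eval (n - k) hc]
  unfold pois
  have h1 : Real.exp (-((1 + α) * b)) * Real.exp (α * b) = Real.exp (-b) := by
    rw [← Real.exp_add]; ring_nf
  have h2 : (1 + α) ^ (n - k + 1) * (1 + α) ^ k = (1 + α) ^ (n + 1) := by
    rw [← pow_add]; congr 1; omega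
  have hfk : (k.factorial : ℝ) ≠ 0 := by positivity
  have hfnk : ((n - k).factorial : ℝ) ≠ 0 := by positivity
  rw [mul_pow, ← h1, ← h2]
  field_simp

theorem stmt_12 (b α : ℝ) (hb : 0 < b) (hα : 0 ≤ α) (n k : ℕ) (hk : k ≤ n) :
    (∫ θ in Set.Ioi (0 : ℝ), jointBX b θ k n * Real.exp (-α * θ))
      / (∫ θ in Set.Ioi (0 : ℝ), pois (b + θ) n * Real.exp (-α * θ))
      = pois ((1 + α) * b) k / poisCDF ((1 + α) * b) n := by
  have hc : (0:ℝ) < 1 + α := by linarith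
  have hpt : ∀ θ : ℝ, pois (b + θ) n * Real.exp (-α * θ)
      = ∑ j ∈ Finset.range (n + 1), jointBX b θ j n * Real.exp (-α * θ) := by
    intro θ
    unfold pois jointBX
    rw [add_pow, Finset.sum_mul, Finset.sum_div, Finset.sum_mul]
    refine Finset.sum_congr rfl (fun j hj => ?_)
    have hjn : j ≤ n := Nat.lt_succ_iff.mp (Finset.mem_range.mp hj)
    rw [Nat.cast_choose ℝ hjn]
    have h1 : (j.factorial : ℝ) ≠ 0 := by positivity
    have h2 : ((n - j).factorial : ℝ) ≠ 0 := by positivity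
    have h3 : (n.factorial : ℝ) ≠ 0 := by positivity
    field_simp
  have hint : ∀ j ∈ Finset.range (n + 1),
      IntegrableOn (fun θ : ℝ => jointBX b θ j n * Real.exp (-α * θ)) (Set.Ioi 0) := by
    intro j _
    simp_rw [term_rw]
    exact ((key_int (n - j) hc).const_mul _)
  have hden : (∫ θ in Set.Ioi (0 : ℝ), pois (b + θ) n * Real.exp (-α * θ))
      = poisCDF ((1 + α) * b) n * (Real.exp (α * b) / (1 + α) ^ (n + 1)) := by
    rw [show (∫ θ in Set.Ioi (0 : ℝ), pois (b + θ) n * Real.exp (-α * θ))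
        = ∫ θ in Set.Ioi (0:ℝ), ∑ j ∈ Finset.range (n + 1),
          jointBX b θ j n * Real.exp (-α * θ) from by simp_rw [hpt]]
    rw [integral_finset_sum _ hint]
    unfold poisCDF
    rw [Finset.sum_mul]
    exact Finset.sum_congr rfl (fun j hj =>
      term_eval b α hb hα n j (Nat.lt_succ_iff.mp (Finset.mem_range.mp hj)))
  rw [hden, term_eval b α hb hα n k hk,
    mul_div_mul_right _ _ (by positivity : Real.exp (α * b) / (1 + α) ^ (n + 1) ≠ 0)]
end

section
/- For b > 0 and n ≥ 1, the conditional risk of the MLE 1 − p_θ̂(n) (where p_θ̂(n) = bⁿ/(max(b,n))ⁿ) as estimator of I_{S>0}, given B ≤ n, equals f_b(n)F_b(n−1)/F_b(n)² + (f_b(n)/F_b(n) − bⁿ/(max(b,n))ⁿ)², and is therefore at least the conditional risk of 1 − p̂, with equality if and only if p_θ̂(n) = p̂(n). -/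
open MeasureTheory ProbabilityTheory Real

lemma pois_pos {b : ℝ} (hb : 0 < b) (k : ℕ) : 0 < pois b k := by
  unfold pois
  positivity

lemma poisCDF_pos_s17 {b : ℝ} (hb : 0 < b) (n : ℕ) : 0 < poisCDF b n := by
  unfold poisCDF
  exact Finset.sum_pos (fun k _ => pois_pos hb k) (by simp)

lemma key_s17 {Ω : Type*} [MeasurableSpace Ω] (μ : Measure Ω) [IsProbabilityMeasure μ]
    (B : Ω → ℕ) (hmB : Measurable B)
    (b : ℝ) (hb : 0 < b)
    (hB : ∀ k, μ {ω | B ω = k} = ENNReal.ofReal (pois b k))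
    (n : ℕ) (c : ℝ) :
    ∫ ω, (c - (if B ω = n then (1 : ℝ) else 0)) ^ 2 ∂(μ[|{ω | B ω ≤ n}])
      = c ^ 2 - (2 * c - 1) * (pois b n / poisCDF b n) := by
  have hs : MeasurableSet {ω | B ω ≤ n} := hmB measurableSet_Iic
  have ht : MeasurableSet {ω | B ω = n} := hmB (measurableSet_singleton n)
  have hμs : μ {ω | B ω ≤ n} = ENNReal.ofReal (poisCDF b n) := by
    have hset : {ω | B ω ≤ n} = ⋃ k ∈ Finset.range (n + 1), {ω | B ω = k} := by
      ext ω; simp [Nat.lt_succ_iff]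
    rw [hset, measure_biUnion_finset]
    · rw [poisCDF, ENNReal.ofReal_sum_of_nonneg (fun k _ => (pois_pos hb k).le)]
      exact Finset.sum_congr rfl fun k _ => hB k
    · intro i _ j _ hij
      simp only [Function.onFun, Set.disjoint_left]
      intro ω h1 h2
      exact hij (h1.symm.trans h2)
    · exact fun k _ => hmB (measurableSet_singleton k)
  have hF : 0 < poisCDF b n := poisCDF_pos_s17 hb n
  have hf : 0 < pois b n := pois_pos hb n
  have hcond : μ[|{ω | B ω ≤ n}] = (μ {ω | B ω ≤ n})⁻¹ • μ.restrict {ω | B ω ≤ n} := rfl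
  rw [hcond, integral_smul_measure]
  have hfun : (fun ω => (c - (if B ω = n then (1 : ℝ) else 0)) ^ 2)
      = fun ω => c ^ 2 + Set.indicator {ω | B ω = n} (fun _ => (c - 1) ^ 2 - c ^ 2) ω := by
    funext ω
    by_cases h : B ω = n <;> simp [Set.indicator, h] <;> ring
  rw [hfun, integral_add (integrable_const _)
    ((integrable_const ((c - 1) ^ 2 - c ^ 2)).indicator ht)]
  rw [integral_const, integral_indicator_const _ ht]
  simp only [Measure.real, smul_eq_mul]
  rw [Measure.restrict_apply ht]
  have hsub : {ω | B ω = n} ∩ {ω | B ω ≤ n} = {ω | B ω = n} := by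
    ext ω; simp (config := { contextual := true }) [Set.mem_setOf_eq, le_of_eq]
  rw [hsub, hμs, hB n, Measure.restrict_apply_univ, hμs]
  rw [ENNReal.toReal_inv, ENNReal.toReal_ofReal hF.le, ENNReal.toReal_ofReal hf.le]
  field_simp
  ring

theorem stmt_17 {Ω : Type*} [MeasurableSpace Ω] (μ : Measure Ω) [IsProbabilityMeasure μ]
    (B : Ω → ℕ) (hmB : Measurable B)
    (b : ℝ) (hb : 0 < b)
    (hB : ∀ k, μ {ω | B ω = k} = ENNReal.ofReal (pois b k))
    (n : ℕ) (hn : 1 ≤ n) :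
    (∫ ω, (b ^ n / max b (n : ℝ) ^ n - (if B ω = n then (1 : ℝ) else 0)) ^ 2
        ∂(μ[|{ω | B ω ≤ n}])
      = pois b n * poisCDF b (n - 1) / poisCDF b n ^ 2
        + (pois b n / poisCDF b n - b ^ n / max b (n : ℝ) ^ n) ^ 2)
    ∧ (∫ ω, (pois b n / poisCDF b n - (if B ω = n then (1 : ℝ) else 0)) ^ 2
          ∂(μ[|{ω | B ω ≤ n}])
        ≤ ∫ ω, (b ^ n / max b (n : ℝ) ^ n - (if B ω = n then (1 : ℝ) else 0)) ^ 2
          ∂(μ[|{ω | B ω ≤ n}]))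
    ∧ ((∫ ω, (pois b n / poisCDF b n - (if B ω = n then (1 : ℝ) else 0)) ^ 2
          ∂(μ[|{ω | B ω ≤ n}])
        = ∫ ω, (b ^ n / max b (n : ℝ) ^ n - (if B ω = n then (1 : ℝ) else 0)) ^ 2
          ∂(μ[|{ω | B ω ≤ n}]))
        ↔ b ^ n / max b (n : ℝ) ^ n = pois b n / poisCDF b n) := by
  set c : ℝ := b ^ n / max b (n : ℝ) ^ n with hc
  set F : ℝ := poisCDF b n with hFdef
  set f : ℝ := pois b n with hfdef
  have hF : 0 < F := poisCDF_pos_s17 hb n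
  have hf : 0 < f := pois_pos hb n
  have hCDF : poisCDF b (n - 1) = F - f := by
    rw [hFdef, hfdef]
    unfold poisCDF
    rw [Nat.sub_add_cancel hn, Finset.sum_range_succ]
    ring
  have h1 := key_s17 μ B hmB b hb hB n c
  have h2 := key_s17 μ B hmB b hb hB n (f / F)
  refine ⟨?_, ?_, ?_⟩
  · rw [h1, hCDF, ← hfdef, ← hFdef]
    field_simp
    ring
  · rw [h1, h2]
    nlinarith [sq_nonneg (c - f / F)]
  · rw [h1, h2]
    constructor
    · intro h
      have : (c - f / F) ^ 2 = 0 := by nlinarith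
      have := pow_eq_zero_iff (n := 2) (by norm_num) |>.mp this
      linarith [sub_eq_zero.mp this]
    · intro h; rw [h]
end
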